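/- There exist an open set Ω ⊆ ℝ² and a function f : Ω → ℝ such that: f ∈ 1-AC²(Ω,ℝ); f is differentiable almost everywhere; f satisfies the Luzin (N) property (ℒ¹(f(E)) = 0 whenever E ⊆ Ω with ℒ²(E) = 0); and f is not ½-absolutely continuous. In particular f ∈ 1-AC²(Ω,ℝ) but f ∉ AC_H²(Ω,ℝ). -/

import Mathlib

/-!
The counterexample is the indicator `f` of the half-plane `{x₂ < x₁}`. A `1`-regular interval is
a square, so its corners `a`, `b` differ by a multiple of `(1, 1)` and lie on the same side of the
diagonal: every sum in the `1`-AC condition vanishes. Off the null diagonal `f` is locally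
constant, and it takes only two values, which gives a.e. differentiability and the Luzin (N)
property. On the other hand the thin `½`-regular intervals `[(0, s/4), (s, 3s/4)]` have their
corners on opposite sides of the diagonal, and every ball centred at the origin sees both values
of `f`; letting their size tend to `0` violates both `½`-AC and `AC_H`.
-/

open MeasureTheory Metric Set Filter

noncomputable section

/-- The closed interval (box) `[a,b]` in `ℝ²`. -/
def box (a b : EuclideanSpace ℝ (Fin 2)) : Set (EuclideanSpace ℝ (Fin 2)) :=
  {x | ∀ ν, a ν ≤ x ν ∧ x ν ≤ b ν}

/-- `f` is `α`-absolutely continuous on `Ω ⊆ ℝ²` (for `α ∈ (0,1]`): for every `ε > 0`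
there is `δ > 0` such that for every finite collection of pairwise disjoint `α`-regular
intervals `[aᵢ,bᵢ] ⊆ Ω` (those with `ℒ²([aᵢ,bᵢ]) ≥ α·(max_ν |aᵢ,ν − bᵢ,ν|)²`),
`∑ ℒ²([aᵢ,bᵢ]) < δ` implies `∑ |f(bᵢ) − f(aᵢ)|² < ε`; `1-AC` is the case `α = 1`. -/
def AlphaAC (α : ℝ) (f : EuclideanSpace ℝ (Fin 2) → ℝ)
    (Ω : Set (EuclideanSpace ℝ (Fin 2))) : Prop :=
  ∀ ε > 0, ∃ δ > 0, ∀ (k : ℕ) (a b : Fin k → EuclideanSpace ℝ (Fin 2)),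
    (∀ i, ∀ ν, a i ν ≤ b i ν) →
    (∀ i, box (a i) (b i) ⊆ Ω) →
    (Pairwise fun i j => Disjoint (box (a i) (b i)) (box (a j) (b j))) →
    (∀ i, α * (⨆ ν, |a i ν - b i ν|) ^ 2 ≤ (volume (box (a i) (b i))).toReal) →
    ∑ i, (volume (box (a i) (b i))).toReal < δ →
    ∑ i, |f (b i) - f (a i)| ^ 2 < ε

/-- `f ∈ AC_H` on `Ω ⊆ ℝ²`: there is `λ ∈ (0,1)` such that for every `ε > 0` there is
`δ > 0` such that for every finite collection of pairwise disjoint closed Euclidean balls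
`B(xᵢ,rᵢ) ⊆ Ω`, `∑ ℒ²(B(xᵢ,rᵢ)) < δ` implies `∑ osc(f, B(xᵢ,λrᵢ))² < ε`. -/
def ACH (f : EuclideanSpace ℝ (Fin 2) → ℝ) (Ω : Set (EuclideanSpace ℝ (Fin 2))) : Prop :=
  ∃ lam ∈ Set.Ioo (0:ℝ) 1, ∀ ε > 0, ∃ δ > 0,
    ∀ (k : ℕ) (x : Fin k → EuclideanSpace ℝ (Fin 2)) (r : Fin k → ℝ),
    (∀ i, 0 < r i) →
    (∀ i, closedBall (x i) (r i) ⊆ Ω) →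
    (Pairwise fun i j => Disjoint (closedBall (x i) (r i)) (closedBall (x j) (r j))) →
    ∑ i, (volume (closedBall (x i) (r i))).toReal < δ →
    ∑ i, (Metric.diam (f '' closedBall (x i) (lam * r i))) ^ 2 < ε

lemma volume_box (a b : EuclideanSpace ℝ (Fin 2)) :
    volume (box a b) = ENNReal.ofReal (b 0 - a 0) * ENNReal.ofReal (b 1 - a 1) := by
  have h : box a b = (MeasurableEquiv.toLp 2 (Fin 2 → ℝ)).symm ⁻¹'
      (univ.pi fun ν => Icc (a ν) (b ν)) := by
    ext x
    exact ⟨fun h ν _ => h ν, fun h ν => h ν trivial⟩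
  rw [h, (EuclideanSpace.volume_preserving_symm_measurableEquiv_toLp (Fin 2)).measure_preimage
      ((MeasurableSet.univ_pi fun ν => measurableSet_Icc).nullMeasurableSet),
    volume_pi_pi]
  simp [Real.volume_Icc, Fin.prod_univ_two]

lemma volume_box_toReal {a b : EuclideanSpace ℝ (Fin 2)} (hab : ∀ ν, a ν ≤ b ν) :
    (volume (box a b)).toReal = (b 0 - a 0) * (b 1 - a 1) := by
  rw [volume_box, ENNReal.toReal_mul, ENNReal.toReal_ofReal (sub_nonneg.2 (hab 0)),
    ENNReal.toReal_ofReal (sub_nonneg.2 (hab 1))]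

lemma sub_eq_sub_of_oneRegular {a b : EuclideanSpace ℝ (Fin 2)} (hab : ∀ ν, a ν ≤ b ν)
    (hreg : (⨆ ν, |a ν - b ν|) ^ 2 ≤ (volume (box a b)).toReal) :
    b 0 - a 0 = b 1 - a 1 := by
  have hside : ∀ ν, b ν - a ν ≤ ⨆ ν, |a ν - b ν| := fun ν =>
    ((le_abs_self _).trans (abs_sub_comm _ _).le).trans
      (le_ciSup (Finite.bddAbove_range fun ν => |a ν - b ν|) ν)
  have h0 := sub_nonneg.2 (hab 0)
  have h1 := sub_nonneg.2 (hab 1)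
  rw [volume_box_toReal hab] at hreg
  nlinarith [hside 0, hside 1, mul_self_nonneg (b 0 - a 0 - (b 1 - a 1))]

lemma volume_setOf_apply_eq_apply {ι : Type*} [Fintype ι] {i j : ι} (hij : i ≠ j) :
    volume {x : EuclideanSpace ℝ ι | x i = x j} = 0 := by
  classical
  let L := (EuclideanSpace.proj i - EuclideanSpace.proj j : EuclideanSpace ℝ ι →L[ℝ] ℝ)
  have hker : {x : EuclideanSpace ℝ ι | x i = x j} = (LinearMap.ker L.toLinearMap : Set _) := by
    ext x
    simp [L, sub_eq_zero]
  rw [hker]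
  refine Measure.addHaar_submodule _ _ fun htop => ?_
  have : EuclideanSpace.single i (1 : ℝ) ∈ LinearMap.ker L.toLinearMap := htop ▸ Submodule.mem_top
  simp [L, hij.symm] at this

section Indicator

variable {𝕜 E F : Type*} [NontriviallyNormedField 𝕜] [NormedAddCommGroup E] [NormedSpace 𝕜 E]
  [NormedAddCommGroup F] [NormedSpace 𝕜 F]

lemma differentiableAt_indicator_const {s : Set E} {x : E} (c : F) (hx : x ∉ frontier s) :
    DifferentiableAt 𝕜 (s.indicator fun _ => c) x := by
  by_cases hint : x ∈ interior s
  · refine (differentiableAt_const c).congr_of_eventuallyEq ?_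
    filter_upwards [mem_interior_iff_mem_nhds.1 hint] with y hy
    exact indicator_of_mem hy _
  · have hcl : x ∉ closure s := fun h => hx ⟨h, hint⟩
    refine (differentiableAt_const (0 : F)).congr_of_eventuallyEq ?_
    filter_upwards [isClosed_closure.isOpen_compl.mem_nhds hcl] with y hy
    exact indicator_of_notMem (fun h => hy (subset_closure h)) _

lemma ae_differentiableAt_indicator_const [MeasurableSpace E] {μ : Measure E} {s : Set E}
    (c : F) (hs : μ (frontier s) = 0) :
    ∀ᵐ x ∂μ, DifferentiableAt 𝕜 (s.indicator fun _ => c) x := by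
  filter_upwards [measure_eq_zero_iff_ae_notMem.1 hs] with x hx
  exact differentiableAt_indicator_const c hx

end Indicator

lemma toReal_volume_closedBall_fin_two (x : EuclideanSpace ℝ (Fin 2)) {r : ℝ} (hr : 0 ≤ r) :
    (volume (closedBall x r)).toReal = r ^ 2 * Real.pi := by
  rw [EuclideanSpace.volume_closedBall_fin_two, ENNReal.toReal_mul, ← ENNReal.ofReal_pow hr,
    ENNReal.toReal_ofReal (by positivity), ENNReal.toReal_ofReal Real.pi_pos.le]

lemma not_alphaAC_of_forall_jump {α : ℝ} {f : EuclideanSpace ℝ (Fin 2) → ℝ}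
    {Ω : Set (EuclideanSpace ℝ (Fin 2))}
    (h : ∀ δ > 0, ∃ a b : EuclideanSpace ℝ (Fin 2), (∀ ν, a ν ≤ b ν) ∧ box a b ⊆ Ω ∧
      α * (⨆ ν, |a ν - b ν|) ^ 2 ≤ (volume (box a b)).toReal ∧
      (volume (box a b)).toReal < δ ∧ 1 ≤ |f b - f a|) :
    ¬ AlphaAC α f Ω := by
  intro hf
  obtain ⟨δ, hδ, hAC⟩ := hf 1 one_pos
  obtain ⟨a, b, hab, hΩ, hreg, hvol, hjump⟩ := h δ hδ
  have := hAC 1 (fun _ => a) (fun _ => b) (fun _ => hab) (fun _ => hΩ)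
    (fun i j hij => absurd (Subsingleton.elim i j) hij) (fun _ => hreg) (by simpa using hvol)
  simp only [Finset.univ_unique, Finset.sum_singleton] at this
  nlinarith

lemma not_ACH_of_forall_jump {f : EuclideanSpace ℝ (Fin 2) → ℝ}
    {Ω : Set (EuclideanSpace ℝ (Fin 2))}
    (h : ∀ lam ∈ Ioo (0 : ℝ) 1, ∀ δ > 0, ∃ (x : EuclideanSpace ℝ (Fin 2)) (r : ℝ), 0 < r ∧
      closedBall x r ⊆ Ω ∧ (volume (closedBall x r)).toReal < δ ∧
      1 ≤ diam (f '' closedBall x (lam * r))) :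
    ¬ ACH f Ω := by
  rintro ⟨lam, hlam, hf⟩
  obtain ⟨δ, hδ, hACH⟩ := hf 1 one_pos
  obtain ⟨x, r, hr, hΩ, hvol, hosc⟩ := h lam hlam δ hδ
  have := hACH 1 (fun _ => x) (fun _ => r) (fun _ => hr) (fun _ => hΩ)
    (fun i j hij => absurd (Subsingleton.elim i j) hij) (by simpa using hvol)
  simp only [Finset.univ_unique, Finset.sum_singleton] at this
  nlinarith

def belowDiagonal : Set (EuclideanSpace ℝ (Fin 2)) := {x | x 1 < x 0}

abbrev belowDiagonalIndicator : EuclideanSpace ℝ (Fin 2) → ℝ := belowDiagonal.indicator 1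

lemma belowDiagonalIndicator_mem (x : EuclideanSpace ℝ (Fin 2)) :
    belowDiagonalIndicator x ∈ ({0, 1} : Set ℝ) := by
  by_cases hx : x ∈ belowDiagonal <;> simp [hx]

lemma belowDiagonalIndicator_eq_of_sub_eq {a b : EuclideanSpace ℝ (Fin 2)}
    (h : b 0 - a 0 = b 1 - a 1) : belowDiagonalIndicator b = belowDiagonalIndicator a := by
  have : b ∈ belowDiagonal ↔ a ∈ belowDiagonal := by
    show b 1 < b 0 ↔ a 1 < a 0
    constructor <;> intro <;> linarith
  by_cases ha : a ∈ belowDiagonal <;> simp [ha, this]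

lemma alphaAC_one_belowDiagonalIndicator (Ω : Set (EuclideanSpace ℝ (Fin 2))) :
    AlphaAC 1 belowDiagonalIndicator Ω := by
  intro ε hε
  refine ⟨1, one_pos, fun k a b hab _ _ hreg _ => ?_⟩
  have hzero : ∀ i, |belowDiagonalIndicator (b i) - belowDiagonalIndicator (a i)| ^ 2 = 0 :=
    fun i => by
      rw [belowDiagonalIndicator_eq_of_sub_eq
        (sub_eq_sub_of_oneRegular (hab i) (by simpa using hreg i))]
      simp
  simpa [hzero] using hε

lemma volume_frontier_belowDiagonal : volume (frontier belowDiagonal) = 0 :=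
  measure_mono_null (frontier_lt_subset_eq (EuclideanSpace.proj 1).continuous
    (EuclideanSpace.proj 0).continuous) (volume_setOf_apply_eq_apply (by decide))

lemma exists_halfRegular_box_jump {s : ℝ} (hs : 0 < s) :
    ∃ a b : EuclideanSpace ℝ (Fin 2), (∀ ν, a ν ≤ b ν) ∧
      1 / 2 * (⨆ ν, |a ν - b ν|) ^ 2 ≤ (volume (box a b)).toReal ∧
      (volume (box a b)).toReal = s ^ 2 / 2 ∧
      1 ≤ |belowDiagonalIndicator b - belowDiagonalIndicator a| := by
  set a : EuclideanSpace ℝ (Fin 2) := WithLp.toLp 2 ![0, s / 4]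
  set b : EuclideanSpace ℝ (Fin 2) := WithLp.toLp 2 ![s, 3 * s / 4]
  have hab : ∀ ν, a ν ≤ b ν := fun ν => by
    fin_cases ν <;> simp [a, b] <;> linarith
  have hvol : (volume (box a b)).toReal = s ^ 2 / 2 := by
    rw [volume_box_toReal hab]
    change (s - 0) * (3 * s / 4 - s / 4) = s ^ 2 / 2
    ring
  have hsup : (⨆ ν, |a ν - b ν|) ≤ s := ciSup_le fun ν => by
    fin_cases ν <;> simp only [a, b] <;> rw [abs_le] <;> constructor <;> simp <;> linarith
  have hsup0 : 0 ≤ ⨆ ν, |a ν - b ν| := Real.iSup_nonneg fun ν => abs_nonneg _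
  have ha : a ∉ belowDiagonal := show ¬ s / 4 < 0 from not_lt.2 (by positivity)
  have hb : b ∈ belowDiagonal := show 3 * s / 4 < s by linarith
  refine ⟨a, b, hab, ?_, hvol, by simp [ha, hb]⟩
  rw [hvol]
  nlinarith [pow_le_pow_left₀ hsup0 hsup 2]

lemma one_le_diam_image_closedBall_zero {ρ : ℝ} (hρ : 0 < ρ) :
    1 ≤ diam (belowDiagonalIndicator '' closedBall 0 ρ) := by
  have hbdd : Bornology.IsBounded (belowDiagonalIndicator '' closedBall 0 ρ) :=
    (toFinite ({0, 1} : Set ℝ)).isBounded.subset <| by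
      rintro _ ⟨x, _, rfl⟩
      exact belowDiagonalIndicator_mem x
  have h0 : (0 : ℝ) ∈ belowDiagonalIndicator '' closedBall 0 ρ :=
    ⟨0, mem_closedBall_self hρ.le, by simp [belowDiagonal]⟩
  have h1 : (1 : ℝ) ∈ belowDiagonalIndicator '' closedBall 0 ρ := by
    refine ⟨EuclideanSpace.single 0 ρ, ?_, ?_⟩
    · rw [mem_closedBall, dist_zero_right, PiLp.norm_single, Real.norm_of_nonneg hρ.le]
    · exact indicator_of_mem (by simpa [belowDiagonal] using hρ) 1
  simpa using dist_le_diam_of_mem hbdd h1 h0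

/-- There exist an open set `Ω ⊆ ℝ²` and a function `f : Ω → ℝ` such that
`f ∈ 1-AC²(Ω,ℝ)`, `f` is differentiable a.e. on `Ω`, `f` has the Luzin (N) property, but
`f` is not ½-absolutely continuous; in particular `f ∉ AC_H²(Ω,ℝ)`. -/
theorem exists_oneAC_WDN_not_halfAC :
    ∃ (Ω : Set (EuclideanSpace ℝ (Fin 2))) (f : EuclideanSpace ℝ (Fin 2) → ℝ),
      IsOpen Ω ∧ AlphaAC 1 f Ω ∧
      (∀ᵐ x ∂(volume : Measure (EuclideanSpace ℝ (Fin 2))), x ∈ Ω → DifferentiableAt ℝ f x) ∧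
      (∀ E ⊆ Ω, volume E = 0 → volume (f '' E) = 0) ∧
      ¬ AlphaAC (1/2) f Ω ∧ ¬ ACH f Ω := by
  refine ⟨univ, belowDiagonalIndicator, isOpen_univ, alphaAC_one_belowDiagonalIndicator univ,
    ?_, ?_, ?_, ?_⟩
  · exact (ae_differentiableAt_indicator_const 1 volume_frontier_belowDiagonal).mono
      fun x hx _ => hx
  · intro E _ _
    refine measure_mono_null ?_ ((toFinite ({0, 1} : Set ℝ)).measure_zero volume)
    rintro _ ⟨x, _, rfl⟩
    exact belowDiagonalIndicator_mem x
  · refine not_alphaAC_of_forall_jump fun δ hδ => ?_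
    obtain ⟨a, b, hab, hreg, hvol, hjump⟩ := exists_halfRegular_box_jump (Real.sqrt_pos.2 hδ)
    refine ⟨a, b, hab, subset_univ _, hreg, ?_, hjump⟩
    rw [hvol, Real.sq_sqrt hδ.le]
    linarith
  · refine not_ACH_of_forall_jump fun lam hlam δ hδ => ⟨0, Real.sqrt δ / 2, by positivity,
      subset_univ _, ?_, one_le_diam_image_closedBall_zero (mul_pos hlam.1 (by positivity))⟩
    rw [toReal_volume_closedBall_fin_two 0 (by positivity), div_pow, Real.sq_sqrt hδ.le]
    nlinarith [Real.pi_lt_four]
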